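/- arXiv:1209.3000 — 3 statements merged into one kernel-verified Lean document; each statement's English description precedes it below -/
import Mathlib

section
/- Let A₀ and A₁ be unital C*-algebras and let I(A₀,A₁) = { f ∈ C([0,1], A₀ ⊗ A₁) : f(0) ∈ A₀ ⊗ 1 and f(1) ∈ 1 ⊗ A₁ }. If both A₀ and A₁ contain the matrix algebra M_k unitally (i.e., there exist unital *-homomorphisms M_k → A₀ and M_k → A₁), then I(A₀,A₁) also contains M_k unitally. -/
/-!
Write `a = ι₀ ∘ Φ₀` and `b = ι₁ ∘ Φ₁`; these are commuting unital copies of `M_k` in `B`.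
The flip `w = ∑ a(eᵢⱼ) b(eⱼᵢ)` is a self-adjoint unitary with `w a(x) w = b(x)`, so
`p = (1 - w) / 2` is a projection and `t ↦ (1 - p) + e^{iπt} p` is a path of unitaries from
`1` to `w`. Conjugating the constant map `a` along this path gives the required embedding:
at `t = 0` it is `a`, at `t = 1` it is `b`.
-/

open Matrix

theorem Matrix.single_one_mul_single_one {n α : Type*} [Fintype n] [DecidableEq n] [Semiring α]
    (i j p q : n) :
    single i j (1 : α) * single p q 1 = if j = p then single i q 1 else 0 := by
  split_ifs with h
  · subst h; simp
  · simp [h]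

section MatrixFlip

variable {n R B : Type*} [Fintype n] [DecidableEq n] [CommSemiring R] [StarRing R]
  [Semiring B] [StarRing B] [Algebra R B] (a b : Matrix n n R →⋆ₐ[R] B)

/-- The image of the flip `∑ eᵢⱼ ⊗ eⱼᵢ` of `Mₙ ⊗ Mₙ` under `a ⊗ b`. -/
def matrixFlip : B := ∑ i, ∑ j, a (single i j 1) * b (single j i 1)

variable {a b} (hab : ∀ x y, Commute (a x) (b y))
include hab

theorem matrixFlip_mul_map_single (p q : n) :
    matrixFlip a b * a (single p q 1) = ∑ i, a (single i q 1) * b (single p i 1) := by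
  simp only [matrixFlip, Finset.sum_mul, mul_assoc, ← (hab _ _).eq]
  simp [← mul_assoc, ← map_mul, single_one_mul_single_one, apply_ite a]

theorem map_single_mul_matrixFlip (p q : n) :
    b (single p q 1) * matrixFlip a b = ∑ i, a (single i q 1) * b (single p i 1) := by
  simp only [matrixFlip, Finset.mul_sum, ← mul_assoc, (hab _ _).eq]
  simp [← map_mul, single_one_mul_single_one, apply_ite b]

theorem matrixFlip_mul_map (x : Matrix n n R) :
    matrixFlip a b * a x = b x * matrixFlip a b := by
  induction x using Matrix.induction_on' with
  | h_zero => simp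
  | h_add x y hx hy => simp only [map_add, mul_add, add_mul, hx, hy]
  | h_std_basis i j c =>
    rw [show single i j c = c • single i j 1 by rw [smul_single, smul_eq_mul, mul_one],
      map_smul, map_smul, mul_smul_comm, smul_mul_assoc, matrixFlip_mul_map_single hab,
      map_single_mul_matrixFlip hab]

theorem matrixFlip_mul_self : matrixFlip a b * matrixFlip a b = 1 := by
  calc matrixFlip a b * matrixFlip a b
      = ∑ p, ∑ q, ∑ i, a (single i q 1) * (b (single p i 1) * b (single q p 1)) := by
        conv_lhs => enter [2]; rw [matrixFlip]
        simp only [Finset.mul_sum, ← mul_assoc, matrixFlip_mul_map_single hab]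
        simp only [Finset.sum_mul, mul_assoc]
    _ = a 1 * b 1 := by
        simp [← map_mul, single_one_mul_single_one, apply_ite b, ← map_sum, ← Finset.sum_mul,
          sum_single_one]
    _ = 1 := by simp

theorem isSelfAdjoint_matrixFlip : IsSelfAdjoint (matrixFlip a b) := by
  rw [IsSelfAdjoint, matrixFlip, star_sum, Finset.sum_comm]
  simp only [star_sum, star_mul, ← map_star, star_eq_conjTranspose, conjTranspose_single,
    star_one, (hab _ _).eq]

theorem matrixFlip_mem_unitary : matrixFlip a b ∈ unitary B := by
  rw [Unitary.mem_iff, (isSelfAdjoint_matrixFlip hab).star_eq, matrixFlip_mul_self hab]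
  exact ⟨rfl, rfl⟩

theorem matrixFlip_mul_map_mul_star (x : Matrix n n R) :
    matrixFlip a b * a x * star (matrixFlip a b) = b x := by
  rw [(isSelfAdjoint_matrixFlip hab).star_eq, matrixFlip_mul_map hab, mul_assoc,
    matrixFlip_mul_self hab, mul_one]

end MatrixFlip

section UnitaryPath

theorem IsStarProjection.one_sub_add_smul_mul_one_sub_add_smul {S A : Type*} [CommRing S]
    [Ring A] [StarRing A] [Algebra S A] {p : A} (hp : IsStarProjection p) (c d : S) :
    (1 - p + c • p) * (1 - p + d • p) = 1 - p + (c * d) • p := by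
  simp only [add_mul, mul_add, mul_smul_comm, smul_mul_assoc, hp.isIdempotentElem.eq,
    hp.one_sub.isIdempotentElem.eq, hp.mul_one_sub_self, hp.one_sub_mul_self, smul_zero,
    add_zero, zero_add, smul_smul, mul_comm d c]

theorem IsStarProjection.one_sub_add_smul_mem_unitary {S A : Type*} [CommRing S] [StarRing S]
    [Ring A] [StarRing A] [Algebra S A] [StarModule S A] {p : A} (hp : IsStarProjection p)
    {z : S} (hz : z ∈ unitary S) : 1 - p + z • p ∈ unitary A := by
  have hstar : star (1 - p + z • p) = 1 - p + star z • p := by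
    simp [star_smul, hp.isSelfAdjoint.star_eq]
  rw [Unitary.mem_iff, hstar, hp.one_sub_add_smul_mul_one_sub_add_smul,
    hp.one_sub_add_smul_mul_one_sub_add_smul, Unitary.star_mul_self_of_mem hz,
    Unitary.mul_star_self_of_mem hz, one_smul, sub_add_cancel]
  exact ⟨rfl, rfl⟩

theorem IsSelfAdjoint.isStarProjection_half_smul_one_sub {A : Type*} [Ring A] [StarRing A]
    [Algebra ℂ A] [StarModule ℂ A] {w : A} (hw : IsSelfAdjoint w) (hwu : w ∈ unitary A) :
    IsStarProjection ((2⁻¹ : ℂ) • (1 - w)) := by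
  have hww : w * w = 1 := by simpa [hw.star_eq] using Unitary.star_mul_self_of_mem hwu
  refine ⟨?_, ?_⟩
  · have hsq : (1 - w) * (1 - w) = (2 : ℂ) • (1 - w) := by
      simp only [sub_mul, mul_sub, hww, one_mul, mul_one, two_smul]
      abel
    rw [IsIdempotentElem, smul_mul_smul_comm, hsq, smul_smul]
    norm_num
  · simp [IsSelfAdjoint, star_smul, hw.star_eq]

theorem Complex.exp_ofReal_mul_I_mem_unitary (x : ℝ) :
    Complex.exp (x * Complex.I) ∈ unitary ℂ := by
  rw [Unitary.mem_iff_star_mul_self, Complex.star_def, Complex.conj_mul',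
    Complex.norm_exp_ofReal_mul_I]
  simp

theorem IsSelfAdjoint.exists_unitary_path_one_to_self {A : Type*} [Ring A] [StarRing A]
    [TopologicalSpace A] [IsTopologicalRing A] [ContinuousStar A] [Algebra ℂ A]
    [StarModule ℂ A] [ContinuousSMul ℂ A] {w : A} (hw : IsSelfAdjoint w)
    (hwu : w ∈ unitary A) :
    ∃ u : unitary C(unitInterval, A),
      (u : C(unitInterval, A)) 0 = 1 ∧ (u : C(unitInterval, A)) 1 = w := by
  set p := (2⁻¹ : ℂ) • (1 - w)
  have hp : IsStarProjection p := hw.isStarProjection_half_smul_one_sub hwu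
  let z : unitInterval → ℂ := fun t => Complex.exp ((Real.pi * t : ℝ) * Complex.I)
  have hz (t) : 1 - p + z t • p ∈ unitary A :=
    hp.one_sub_add_smul_mem_unitary (Complex.exp_ofReal_mul_I_mem_unitary _)
  let u : C(unitInterval, A) := ⟨fun t => 1 - p + z t • p, by fun_prop⟩
  have hu : u ∈ unitary C(unitInterval, A) :=
    Unitary.mem_iff.2 ⟨ContinuousMap.ext fun t => Unitary.star_mul_self_of_mem (hz t),
      ContinuousMap.ext fun t => Unitary.mul_star_self_of_mem (hz t)⟩
  refine ⟨⟨u, hu⟩, by simp [u, z], ?_⟩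
  have hz1 : z 1 = -1 := by simp [z, Complex.exp_pi_mul_I]
  simp only [u, ContinuousMap.coe_mk, hz1, p]
  module

end UnitaryPath

@[simps]
def ContinuousMap.constStarAlgHom (R X A : Type*) [CommSemiring R] [TopologicalSpace X]
    [Semiring A] [Algebra R A] [Star A] [TopologicalSpace A] [IsTopologicalSemiring A]
    [ContinuousStar A] : A →⋆ₐ[R] C(X, A) where
  toFun := ContinuousMap.const X
  map_one' := rfl
  map_mul' _ _ := rfl
  map_zero' := rfl
  map_add' _ _ := rfl
  commutes' _ := rfl
  map_star' _ := rfl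

theorem statement0_general
    (A₀ A₁ B : Type) [CStarAlgebra A₀] [CStarAlgebra A₁] [CStarAlgebra B]
    (ι₀ : A₀ →⋆ₐ[ℂ] B) (ι₁ : A₁ →⋆ₐ[ℂ] B)
    (hι₀ : Function.Injective ι₀)
    (hcomm : ∀ (a₀ : A₀) (a₁ : A₁), Commute (ι₀ a₀) (ι₁ a₁))
    (k : ℕ)
    (Φ₀ : Matrix (Fin k) (Fin k) ℂ →⋆ₐ[ℂ] A₀)
    (Φ₁ : Matrix (Fin k) (Fin k) ℂ →⋆ₐ[ℂ] A₁)
    (hΦ₀ : Function.Injective Φ₀) :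
    ∃ Φ : Matrix (Fin k) (Fin k) ℂ →⋆ₐ[ℂ] C(unitInterval, B),
      Function.Injective Φ ∧
      ∀ x : Matrix (Fin k) (Fin k) ℂ,
        Φ x 0 ∈ Set.range ι₀ ∧ Φ x 1 ∈ Set.range ι₁ := by
  set a := ι₀.comp Φ₀
  set b := ι₁.comp Φ₁
  have hab : ∀ x y, Commute (a x) (b y) := fun x y => hcomm (Φ₀ x) (Φ₁ y)
  obtain ⟨u, hu0, hu1⟩ := (isSelfAdjoint_matrixFlip hab).exists_unitary_path_one_to_self
    (matrixFlip_mem_unitary hab)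
  let Φ := (Unitary.conjStarAlgAut ℂ _ u).toStarAlgHom.comp
    ((ContinuousMap.constStarAlgHom ℂ unitInterval B).comp a)
  have hΦ0 (x) : Φ x 0 = a x := by simp [Φ, hu0]
  have hΦ1 (x) : Φ x 1 = b x := by
    simpa [Φ, hu1] using matrixFlip_mul_map_mul_star hab x
  refine ⟨Φ, fun x y hxy => hΦ₀ (hι₀ ?_), fun x => ⟨⟨Φ₀ x, (hΦ0 x).symm⟩, ⟨Φ₁ x, (hΦ1 x).symm⟩⟩⟩
  exact (hΦ0 x).symm.trans (congr($hxy 0).trans (hΦ0 y))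

/-- Let `A₀`, `A₁` be unital C*-algebras, and realize a C*-tensor product
`A₀ ⊗ A₁` as a unital C*-algebra `B` together with commuting unital embeddings
`ι₀ : A₀ → B`, `ι₁ : A₁ → B`.  Let
`I(A₀, A₁) = {f ∈ C([0,1], B) : f 0 ∈ ι₀(A₀), f 1 ∈ ι₁(A₁)}` be the generalized
dimension drop algebra.  If both `A₀` and `A₁` contain `M_k` unitally, then
`I(A₀, A₁)` contains `M_k` unitally, i.e. there is an injective unital *-homomorphism
`Φ : M_k → C([0,1], B)` whose image lies in `I(A₀, A₁)`. -/
theorem statement0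
    (A₀ A₁ B : Type) [CStarAlgebra A₀] [CStarAlgebra A₁] [CStarAlgebra B] [Nontrivial B]
    (ι₀ : A₀ →⋆ₐ[ℂ] B) (ι₁ : A₁ →⋆ₐ[ℂ] B)
    (hι₀ : Function.Injective ι₀) (hι₁ : Function.Injective ι₁)
    (hcomm : ∀ (a₀ : A₀) (a₁ : A₁), Commute (ι₀ a₀) (ι₁ a₁))
    (k : ℕ) (hk : 0 < k)
    (Φ₀ : Matrix (Fin k) (Fin k) ℂ →⋆ₐ[ℂ] A₀)
    (Φ₁ : Matrix (Fin k) (Fin k) ℂ →⋆ₐ[ℂ] A₁)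
    (hΦ₀ : Function.Injective Φ₀) (hΦ₁ : Function.Injective Φ₁) :
    ∃ Φ : Matrix (Fin k) (Fin k) ℂ →⋆ₐ[ℂ] C(unitInterval, B),
      Function.Injective Φ ∧
      ∀ x : Matrix (Fin k) (Fin k) ℂ,
        Φ x 0 ∈ Set.range ι₀ ∧ Φ x 1 ∈ Set.range ι₁ :=
  statement0_general A₀ A₁ B ι₀ ι₁ hι₀ hcomm k Φ₀ Φ₁ hΦ₀
end

section
/- Let A be a unital separable simple infinite-dimensional C*-algebra whose extreme tracial boundary ∂ₑ(T(A)) is compact. Then for any central sequence (fₙ) of uniformly bounded elements of A and any a ∈ A, max_{τ ∈ ∂ₑ(T(A))} |τ(fₙ a) − τ(fₙ)τ(a)| → 0 as n → ∞. -/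
open scoped ComplexOrder

/-- A tracial state on a unital C*-algebra, as a (weak-* continuous) linear functional. -/
def IsTracialState {A : Type*} [CStarAlgebra A] (τ : WeakDual ℂ A) : Prop :=
  τ 1 = 1 ∧ (∀ a : A, 0 ≤ τ (star a * a)) ∧ ∀ a b : A, τ (a * b) = τ (b * a)

/-- The trace space `T(A)`, inside the weak-* dual of `A`. -/
def TraceSpace (A : Type*) [CStarAlgebra A] : Set (WeakDual ℂ A) :=
  {τ | IsTracialState τ}

/-- The extreme boundary `∂ₑ(T(A))` of the trace space. -/
def ExtremeTraceBoundary (A : Type*) [CStarAlgebra A] : Set (WeakDual ℂ A) :=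
  {τ ∈ TraceSpace A | ∀ τ₁ ∈ TraceSpace A, ∀ τ₂ ∈ TraceSpace A, ∀ t : ℝ,
    0 < t → t < 1 → τ = (t : ℂ) • τ₁ + ((1 - t : ℝ) : ℂ) • τ₂ → τ₁ = τ ∧ τ₂ = τ}

def IsSimpleCStarAlgebra (A : Type*) [CStarAlgebra A] : Prop :=
  ∀ I : TwoSidedIdeal A, IsClosed (I : Set A) → I = ⊥ ∨ I = ⊤

/-!
Since `τ (f * a) - τ f * τ a` is linear in `f` and vanishes on scalars, splitting `fₙ` into real
and imaginary parts and rescaling reduces the claim to central sequences with `0 ≤ fₙ ≤ 1`.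
Uniform convergence over `∂ₑ(T(A))` can be tested along ultrafilters on pairs `(n, τ)`. Along
one, compactness of the boundary gives a limit `τ → τ₀ ∈ ∂ₑ(T(A))`, and Banach–Alaoglu a weak-*
limit `ψ` of the functionals `τ (fₙ * ·)`. Centrality makes `ψ` tracial and `0 ≤ fₙ ≤ 1` makes
both `ψ` and `τ₀ - ψ` positive, so extremality of `τ₀` forces `ψ = ψ 1 • τ₀`; hence the defect
tends to `ψ a - ψ 1 * τ₀ a = 0`.
-/

open Filter Topology
open scoped ComplexStarModule

namespace PositiveLinearMap

variable {A : Type*} [CStarAlgebra A] [PartialOrder A] [StarOrderedRing A]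

lemma norm_apply_sq_le (f : A →ₚ[ℂ] ℂ) (x : A) :
    ‖f x‖ ^ 2 ≤ ‖f 1‖ * ‖f (star x * x)‖ := by
  have h := norm_inner_le_norm (𝕜 := ℂ) (f.toPreGNS 1) (f.toPreGNS x)
  have h1 := f.preGNS_norm_sq (f.toPreGNS 1)
  have h2 := f.preGNS_norm_sq (f.toPreGNS x)
  simp only [preGNS_inner_def, ofPreGNS_toPreGNS, star_one, one_mul] at h h1 h2
  rw [← h1, ← h2, norm_pow, norm_pow, Complex.norm_real, Complex.norm_real, norm_norm, norm_norm,
    ← mul_pow]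
  exact pow_le_pow_left₀ (norm_nonneg _) h 2

lemma norm_apply_le (f : A →ₚ[ℂ] ℂ) (x : A) : ‖f x‖ ≤ ‖f 1‖ * ‖x‖ := by
  have hx := f.norm_apply_le_of_nonneg _ (star_mul_self_nonneg x)
  rw [CStarRing.norm_star_mul_self] at hx
  refine (pow_le_pow_iff_left₀ (norm_nonneg _) (by positivity) two_ne_zero).mp ?_
  calc ‖f x‖ ^ 2 ≤ ‖f 1‖ * ‖f (star x * x)‖ := f.norm_apply_sq_le x
    _ ≤ ‖f 1‖ * (‖f 1‖ * (‖x‖ * ‖x‖)) := by gcongr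
    _ = (‖f 1‖ * ‖x‖) ^ 2 := by ring

end PositiveLinearMap

namespace WeakDual

variable {𝕜 E : Type*} [NontriviallyNormedField 𝕜] [SeminormedAddCommGroup E] [NormedSpace 𝕜 E]

@[simp]
lemma smul_apply (c : 𝕜) (φ : WeakDual 𝕜 E) (x : E) : (c • φ) x = c * φ x := rfl

@[simp]
lemma sub_apply (φ ψ : WeakDual 𝕜 E) (x : E) : (φ - ψ) x = φ x - ψ x := rfl

end WeakDual

variable {A : Type*} [CStarAlgebra A]

lemma LinearMap.norm_apply_le_of_star_mul_self_nonneg (f : A →ₗ[ℂ] ℂ)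
    (hf : ∀ x, 0 ≤ f (star x * x)) (x : A) : ‖f x‖ ≤ ‖f 1‖ * ‖x‖ := by
  let _ := CStarAlgebra.spectralOrder A
  have _ := CStarAlgebra.spectralOrderedRing A
  let φ : A →ₚ[ℂ] ℂ := .mk₀ f fun y hy => by
    obtain ⟨z, rfl⟩ := CStarAlgebra.nonneg_iff_eq_star_mul_self.mp hy
    exact hf z
  exact φ.norm_apply_le x

def IsPositiveTrace (φ : WeakDual ℂ A) : Prop :=
  (∀ x : A, 0 ≤ φ (star x * x)) ∧ ∀ x y : A, φ (x * y) = φ (y * x)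

namespace IsPositiveTrace

variable {φ : WeakDual ℂ A}

lemma norm_apply_le (hφ : IsPositiveTrace φ) (x : A) : ‖φ x‖ ≤ ‖φ 1‖ * ‖x‖ :=
  LinearMap.norm_apply_le_of_star_mul_self_nonneg (φ : A →ₗ[ℂ] ℂ) hφ.1 x

lemma eq_zero_of_apply_one_eq_zero (hφ : IsPositiveTrace φ) (h1 : φ 1 = 0) : φ = 0 :=
  DFunLike.ext _ _ fun x => norm_le_zero_iff.mp (by simpa [h1] using hφ.norm_apply_le x)

lemma exists_apply_one_eq_ofReal (hφ : IsPositiveTrace φ) : ∃ r : ℝ, 0 ≤ r ∧ φ 1 = r := by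
  have h := hφ.1 1
  rw [star_one, one_mul] at h
  obtain ⟨hre, him⟩ := Complex.nonneg_iff.mp h
  exact ⟨(φ 1).re, hre, Complex.ext rfl him.symm⟩

lemma isTracialState_inv_smul (hφ : IsPositiveTrace φ) {r : ℝ} (hr : 0 < r) (h1 : φ 1 = r) :
    IsTracialState ((r : ℂ)⁻¹ • φ) := by
  refine ⟨?_, fun x => ?_, fun x y => ?_⟩
  · simp [h1, hr.ne']
  · rw [WeakDual.smul_apply, ← Complex.ofReal_inv]
    exact mul_nonneg (by exact_mod_cast (inv_pos.2 hr).le) (hφ.1 x)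
  · simp only [WeakDual.smul_apply, hφ.2 x y]

theorem eq_apply_one_smul_of_mem_extremeTraceBoundary {τ ψ : WeakDual ℂ A}
    (hτ : τ ∈ ExtremeTraceBoundary A) (hψ : IsPositiveTrace ψ) (hτψ : IsPositiveTrace (τ - ψ)) :
    ψ = ψ 1 • τ := by
  obtain ⟨r, hr0, hr⟩ := hψ.exists_apply_one_eq_ofReal
  obtain ⟨s, hs0, hs⟩ := hτψ.exists_apply_one_eq_ofReal
  have hτψ1 : (τ - ψ) 1 = ((1 - r : ℝ) : ℂ) := by simp [hτ.1.1, hr]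
  have hsr : s = 1 - r := by exact_mod_cast hs.symm.trans hτψ1
  rw [hr]
  rcases hr0.eq_or_lt with rfl | hr0
  · rw [Complex.ofReal_zero, zero_smul]
    exact hψ.eq_zero_of_apply_one_eq_zero (by simpa using hr)
  rcases (show r ≤ 1 by linarith).eq_or_lt with rfl | hr1
  · rw [Complex.ofReal_one, one_smul]
    exact (sub_eq_zero.mp (hτψ.eq_zero_of_apply_one_eq_zero (by simpa using hτψ1))).symm
  have h1r : (0 : ℝ) < 1 - r := by linarith
  have hdecomp :
      τ = (r : ℂ) • ((r : ℂ)⁻¹ • ψ) + ((1 - r : ℝ) : ℂ) • (((1 - r : ℝ) : ℂ)⁻¹ • (τ - ψ)) := by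
    rw [smul_inv_smul₀ (by exact_mod_cast hr0.ne'), smul_inv_smul₀ (by exact_mod_cast h1r.ne'),
      add_sub_cancel]
  obtain ⟨hψτ, -⟩ := hτ.2 _ (hψ.isTracialState_inv_smul hr0 hr) _
    (hτψ.isTracialState_inv_smul h1r hτψ1) r hr0 hr1 hdecomp
  rw [← hψτ, smul_inv_smul₀ (by exact_mod_cast hr0.ne')]

end IsPositiveTrace

namespace IsTracialState

variable {τ : WeakDual ℂ A} (hτ : IsTracialState τ)
include hτ

lemma isPositiveTrace : IsPositiveTrace τ := hτ.2

lemma norm_apply_le (x : A) : ‖τ x‖ ≤ ‖x‖ := by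
  simpa [hτ.1] using hτ.isPositiveTrace.norm_apply_le x

lemma apply_nonneg [PartialOrder A] [StarOrderedRing A] {x : A} (hx : 0 ≤ x) : 0 ≤ τ x := by
  obtain ⟨y, rfl⟩ := CStarAlgebra.nonneg_iff_eq_star_mul_self.mp hx
  exact hτ.2.1 y

lemma apply_mul_star_mul_self (h x : A) : τ (h * (star x * x)) = τ (x * h * star x) := by
  rw [← mul_assoc, hτ.2.2, mul_assoc]

lemma apply_mul_mul_sub_apply_mul_mul (h x y : A) :
    τ (h * (x * y)) - τ (h * (y * x)) = τ ((h * x - x * h) * y) := by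
  rw [← mul_assoc, ← mul_assoc, hτ.2.2 (h * y), ← mul_assoc, ← map_sub, sub_mul]

end IsTracialState

def IsAsymptoticallyCentral {ι : Type*} (l : Filter ι) (f : ι → A) : Prop :=
  ∀ x : A, Tendsto (fun i => f i * x - x * f i) l (𝓝 0)

namespace IsAsymptoticallyCentral

variable {ι : Type*} {l : Filter ι} {f g : ι → A}

lemma of_norm (hf : ∀ x : A, Tendsto (fun i => ‖f i * x - x * f i‖) l (𝓝 0)) :
    IsAsymptoticallyCentral l f :=
  fun x => tendsto_zero_iff_norm_tendsto_zero.mpr (hf x)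

lemma comp (hf : IsAsymptoticallyCentral l f) {κ : Type*} {l' : Filter κ} {m : κ → ι}
    (hm : Tendsto m l' l) : IsAsymptoticallyCentral l' (f ∘ m) :=
  fun x => (hf x).comp hm

lemma add (hf : IsAsymptoticallyCentral l f) (hg : IsAsymptoticallyCentral l g) :
    IsAsymptoticallyCentral l (fun i => f i + g i) := fun x => by
  simpa [add_mul, mul_add, add_sub_add_comm] using (hf x).add (hg x)

lemma sub (hf : IsAsymptoticallyCentral l f) (hg : IsAsymptoticallyCentral l g) :
    IsAsymptoticallyCentral l (fun i => f i - g i) := fun x => by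
  simpa [sub_mul, mul_sub, sub_sub_sub_comm] using (hf x).sub (hg x)

lemma const (z : A) (hz : ∀ x, Commute z x) : IsAsymptoticallyCentral l (fun _ => z) :=
  fun x => by simpa [(hz x).eq] using tendsto_const_nhds

lemma smul {R : Type*} [Monoid R] [DistribMulAction R A] [IsScalarTower R A A]
    [SMulCommClass R A A] [ContinuousConstSMul R A] (c : R) (hf : IsAsymptoticallyCentral l f) :
    IsAsymptoticallyCentral l (fun i => c • f i) := fun x => by
  simpa [smul_mul_assoc, mul_smul_comm, smul_sub] using (hf x).const_smul c

lemma star (hf : IsAsymptoticallyCentral l f) : IsAsymptoticallyCentral l (fun i => star (f i)) :=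
  fun x => by simpa [star_sub, star_mul] using ((hf (Star.star x)).star).neg

lemma realPart (hf : IsAsymptoticallyCentral l f) :
    IsAsymptoticallyCentral l (fun i => (ℜ (f i) : A)) := by
  simpa only [realPart_apply_coe] using (hf.add hf.star).smul (2⁻¹ : ℝ)

lemma imaginaryPart (hf : IsAsymptoticallyCentral l f) :
    IsAsymptoticallyCentral l (fun i => (ℑ (f i) : A)) := by
  simpa only [imaginaryPart_apply_coe] using ((hf.sub hf.star).smul (2⁻¹ : ℝ)).smul (-Complex.I)

end IsAsymptoticallyCentral

noncomputable def traceDefect (a f : A) (τ : WeakDual ℂ A) : ℂ := τ (f * a) - τ f * τ a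

lemma traceDefect_add (a f g : A) (τ : WeakDual ℂ A) :
    traceDefect a (f + g) τ = traceDefect a f τ + traceDefect a g τ := by
  simp only [traceDefect, add_mul, map_add]
  ring

lemma traceDefect_smul (a f : A) (c : ℂ) (τ : WeakDual ℂ A) :
    traceDefect a (c • f) τ = c * traceDefect a f τ := by
  simp only [traceDefect, smul_mul_assoc, map_smul, smul_eq_mul]
  ring

lemma traceDefect_one (a : A) {τ : WeakDual ℂ A} (hτ : τ 1 = 1) : traceDefect a 1 τ = 0 := by
  simp [traceDefect, hτ]

lemma traceDefect_algebraMap_add (a f : A) (c : ℝ) {τ : WeakDual ℂ A} (hτ : τ 1 = 1) :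
    traceDefect a (algebraMap ℝ A c + f) τ = traceDefect a f τ := by
  rw [IsScalarTower.algebraMap_apply ℝ ℂ A, Algebra.algebraMap_eq_smul_one, traceDefect_add,
    traceDefect_smul, traceDefect_one a hτ, mul_zero, zero_add]

section Limits

variable {ι : Type*}

theorem isPositiveTrace_of_tendsto [PartialOrder A] [StarOrderedRing A] {l : Filter ι} [l.NeBot]
    {τ : ι → WeakDual ℂ A} (hτ : ∀ᶠ i in l, IsTracialState (τ i)) {h : ι → A}
    (hh : ∀ i, 0 ≤ h i) (hc : IsAsymptoticallyCentral l h) {φ : WeakDual ℂ A}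
    (hφ : ∀ x, Tendsto (fun i => τ i (h i * x)) l (𝓝 (φ x))) : IsPositiveTrace φ := by
  refine ⟨fun x => ge_of_tendsto (hφ _) ?_, fun x y => ?_⟩
  · filter_upwards [hτ] with i hi
    rw [hi.apply_mul_star_mul_self]
    exact hi.apply_nonneg (star_right_conjugate_nonneg (hh i) x)
  · have hbound : ∀ᶠ i in l, ‖τ i (h i * (x * y)) - τ i (h i * (y * x))‖ ≤
        ‖h i * x - x * h i‖ * ‖y‖ := by
      filter_upwards [hτ] with i hi
      rw [hi.apply_mul_mul_sub_apply_mul_mul]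
      exact (hi.norm_apply_le _).trans (norm_mul_le _ _)
    have hdefect : Tendsto (fun i => τ i (h i * (x * y)) - τ i (h i * (y * x))) l (𝓝 0) :=
      squeeze_zero_norm' hbound (by simpa using (hc x).norm.mul_const ‖y‖)
    exact sub_eq_zero.mp (tendsto_nhds_unique ((hφ _).sub (hφ _)) hdefect)

theorem exists_tendsto_apply_mul_left (U : Ultrafilter ι) {τ : ι → WeakDual ℂ A}
    (hτ : ∀ᶠ i in U, IsTracialState (τ i)) {g : ι → A} (hg : ∀ i, ‖g i‖ ≤ 1) :
    ∃ ψ : WeakDual ℂ A, ∀ x, Tendsto (fun i => τ i (g i * x)) U (𝓝 (ψ x)) := by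
  let σ : ι → WeakDual ℂ A := fun i => (τ i : A →L[ℂ] ℂ).comp (ContinuousLinearMap.mul ℂ A (g i))
  have hσ : ∀ᶠ i in U, σ i ∈ WeakDual.toStrongDual ⁻¹' Metric.closedBall 0 1 := by
    filter_upwards [hτ] with i hi
    rw [Set.mem_preimage, mem_closedBall_zero_iff]
    refine ContinuousLinearMap.opNorm_le_bound _ zero_le_one fun x => ?_
    calc ‖τ i (g i * x)‖ ≤ ‖g i * x‖ := hi.norm_apply_le _
      _ ≤ ‖g i‖ * ‖x‖ := norm_mul_le _ _
      _ ≤ 1 * ‖x‖ := by gcongr; exact hg i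
  obtain ⟨ψ, -, hψ⟩ :=
    (WeakDual.isCompact_closedBall 0 1).ultrafilter_le_nhds (U.map σ) (le_principal_iff.2 hσ)
  exact ⟨ψ, fun x => ((WeakDual.eval_continuous x).tendsto ψ).comp hψ⟩

theorem tendsto_traceDefect_of_ultrafilter [PartialOrder A] [StarOrderedRing A] (U : Ultrafilter ι) {τ : ι → WeakDual ℂ A} (hτ : ∀ᶠ i in U, IsTracialState (τ i))
    {τ₀ : WeakDual ℂ A} (hτ₀ : τ₀ ∈ ExtremeTraceBoundary A) (hlim : Tendsto τ U (𝓝 τ₀))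
    {g : ι → A} (hg0 : ∀ i, 0 ≤ g i) (hg1 : ∀ i, g i ≤ 1) (hgc : IsAsymptoticallyCentral U g)
    (a : A) : Tendsto (fun i => traceDefect a (g i) (τ i)) U (𝓝 0) := by
  have hτx : ∀ x, Tendsto (fun i => τ i x) U (𝓝 (τ₀ x)) :=
    fun x => ((WeakDual.eval_continuous x).tendsto τ₀).comp hlim
  have hg : ∀ i, ‖g i‖ ≤ 1 := fun i => by
    nontriviality A
    simpa using CStarAlgebra.norm_le_norm_of_nonneg_of_le (hg0 i) (hg1 i)
  obtain ⟨ψ, hψ⟩ := exists_tendsto_apply_mul_left U hτ hg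
  have hψτ : ψ = ψ 1 • τ₀ := by
    refine (isPositiveTrace_of_tendsto hτ hg0 hgc hψ).eq_apply_one_smul_of_mem_extremeTraceBoundary
      hτ₀ (isPositiveTrace_of_tendsto hτ (fun i => sub_nonneg.2 (hg1 i))
        ((IsAsymptoticallyCentral.const 1 Commute.one_left).sub hgc) fun x => ?_)
    simpa [sub_mul] using (hτx x).sub (hψ x)
  have hlimit : Tendsto (fun i => traceDefect a (g i) (τ i)) U (𝓝 (ψ a - ψ 1 * τ₀ a)) :=
    (hψ a).sub (by simpa using (hψ 1).mul (hτx a))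
  rwa [← WeakDual.smul_apply, ← hψτ, sub_self] at hlimit

end Limits

section Uniform

variable {ι : Type*} {l : Filter ι}

theorem tendsto_traceDefect_prod_of_nonneg_of_le_one [PartialOrder A] [StarOrderedRing A]
    (hcpt : IsCompact (ExtremeTraceBoundary A)) {g : ι → A} (hg0 : ∀ i, 0 ≤ g i)
    (hg1 : ∀ i, g i ≤ 1) (hgc : IsAsymptoticallyCentral l g) (a : A) :
    Tendsto (fun q : ι × WeakDual ℂ A => traceDefect a (g q.1) q.2)
      (l ×ˢ 𝓟 (ExtremeTraceBoundary A)) (𝓝 0) := by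
  refine (tendsto_iff_ultrafilter _ _ _).mpr fun U hU => ?_
  have hK : ∀ᶠ q : ι × WeakDual ℂ A in U, q.2 ∈ ExtremeTraceBoundary A :=
    hU (eventually_prod_principal_iff.mpr (Eventually.of_forall fun _ _ h => h))
  obtain ⟨τ₀, hτ₀, hlim⟩ := hcpt.ultrafilter_le_nhds (U.map Prod.snd) (le_principal_iff.2 hK)
  exact tendsto_traceDefect_of_ultrafilter U (hK.mono fun q hq => hq.1) hτ₀ hlim
    (fun q => hg0 q.1) (fun q => hg1 q.1) (hgc.comp (tendsto_fst.mono_left hU)) a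

theorem tendsto_traceDefect_prod_of_isSelfAdjoint (hcpt : IsCompact (ExtremeTraceBoundary A))
    {p : ι → A} (hp : ∀ i, IsSelfAdjoint (p i)) {C : ℝ} (hC : ∀ i, ‖p i‖ ≤ C)
    (hpc : IsAsymptoticallyCentral l p) (a : A) :
    Tendsto (fun q : ι × WeakDual ℂ A => traceDefect a (p q.1) q.2)
      (l ×ˢ 𝓟 (ExtremeTraceBoundary A)) (𝓝 0) := by
  let _ := CStarAlgebra.spectralOrder A
  have _ := CStarAlgebra.spectralOrderedRing A
  set c := max C 1
  have hc : 0 < c := lt_max_of_lt_right one_pos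
  have hpc' : ∀ i, ‖p i‖ ≤ c := fun i => (hC i).trans (le_max_left _ _)
  let g : ι → A := fun i => (2 * c)⁻¹ • (algebraMap ℝ A c + p i)
  have hle : ∀ i, p i ≤ algebraMap ℝ A c := fun i => (hp i).le_algebraMap_norm_self.trans
    (algebraMap_mono A (hpc' i))
  have hge : ∀ i, -algebraMap ℝ A c ≤ p i := fun i =>
    (neg_le_neg (algebraMap_mono A (hpc' i))).trans (hp i).neg_algebraMap_norm_le_self
  have hg0 : ∀ i, 0 ≤ g i := fun i =>
    smul_nonneg (by positivity) (neg_le_iff_add_nonneg'.mp (hge i))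
  have hg1 : ∀ i, g i ≤ 1 := fun i => by
    have h1g : 1 - g i = (2 * c)⁻¹ • (algebraMap ℝ A c - p i) := by
      simp only [g, Algebra.algebraMap_eq_smul_one]
      match_scalars <;> field_simp
      norm_num
    exact sub_nonneg.mp (h1g ▸ smul_nonneg (by positivity) (sub_nonneg.mpr (hle i)))
  have hgc : IsAsymptoticallyCentral l g :=
    ((IsAsymptoticallyCentral.const _ (Algebra.commutes c)).add hpc).smul _
  have hdefect : ∀ᶠ q in l ×ˢ 𝓟 (ExtremeTraceBoundary A),
      ((2 * c : ℝ) : ℂ) * traceDefect a (g q.1) q.2 = traceDefect a (p q.1) q.2 := by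
    refine eventually_prod_principal_iff.mpr (Eventually.of_forall fun i τ hτ => ?_)
    simp only [g]
    rw [← Complex.coe_smul, traceDefect_smul, traceDefect_algebraMap_add _ _ _ hτ.1.1,
      ← mul_assoc, ← Complex.ofReal_mul, mul_inv_cancel₀ (by positivity), Complex.ofReal_one,
      one_mul]
  simpa using ((tendsto_traceDefect_prod_of_nonneg_of_le_one hcpt hg0 hg1 hgc a).const_mul
    ((2 * c : ℝ) : ℂ)).congr' hdefect

theorem tendsto_traceDefect_prod (hcpt : IsCompact (ExtremeTraceBoundary A)) {f : ι → A} {C : ℝ}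
    (hC : ∀ i, ‖f i‖ ≤ C) (hf : IsAsymptoticallyCentral l f) (a : A) :
    Tendsto (fun q : ι × WeakDual ℂ A => traceDefect a (f q.1) q.2)
      (l ×ˢ 𝓟 (ExtremeTraceBoundary A)) (𝓝 0) := by
  have hre := tendsto_traceDefect_prod_of_isSelfAdjoint hcpt (fun i => (ℜ (f i)).prop)
    (fun i => (realPart.norm_le _).trans (hC i)) hf.realPart a
  have him := tendsto_traceDefect_prod_of_isSelfAdjoint hcpt (fun i => (ℑ (f i)).prop)
    (fun i => (imaginaryPart.norm_le _).trans (hC i)) hf.imaginaryPart a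
  convert hre.add (him.const_mul Complex.I) using 2 with q
  · rw [← traceDefect_smul, ← traceDefect_add, realPart_add_I_smul_imaginaryPart]
  · simp

end Uniform

lemma tendsto_sSup_image_norm_of_tendsto_prod_principal {ι X E : Type*} [SeminormedAddGroup E]
    {l : Filter ι} {s : Set X} {F : ι → X → E}
    (hF : Tendsto (fun q : ι × X => F q.1 q.2) (l ×ˢ 𝓟 s) (𝓝 0)) :
    Tendsto (fun i => sSup ((fun x => ‖F i x‖) '' s)) l (𝓝 0) := by
  refine Metric.tendsto_nhds.mpr fun ε hε => ?_
  have hsmall := eventually_prod_principal_iff.mp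
    ((tendsto_zero_iff_norm_tendsto_zero.mp hF).eventually (gt_mem_nhds (half_pos hε)))
  filter_upwards [hsmall] with i hi
  have hnonneg : 0 ≤ sSup ((fun x => ‖F i x‖) '' s) :=
    Real.sSup_nonneg (Set.forall_mem_image.mpr fun _ _ => norm_nonneg _)
  have hle : sSup ((fun x => ‖F i x‖) '' s) ≤ ε / 2 :=
    Real.sSup_le (Set.forall_mem_image.mpr fun x hx => (hi x hx).le) (half_pos hε).le
  rw [Real.dist_eq, sub_zero, abs_of_nonneg hnonneg]
  linarith

theorem statement8_general
    (A : Type) [CStarAlgebra A]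
    (hcpt : IsCompact (ExtremeTraceBoundary A))
    (f : ℕ → A) (C : ℝ) (hbdd : ∀ n, ‖f n‖ ≤ C)
    (hcentral : ∀ x : A,
      Filter.Tendsto (fun n => ‖f n * x - x * f n‖) Filter.atTop (nhds 0))
    (a : A) :
    Filter.Tendsto
      (fun n => sSup ((fun τ : WeakDual ℂ A =>
        ‖τ (f n * a) - τ (f n) * τ a‖) '' ExtremeTraceBoundary A))
      Filter.atTop (nhds 0) :=
  tendsto_sSup_image_norm_of_tendsto_prod_principal
    (tendsto_traceDefect_prod hcpt hbdd (.of_norm hcentral) a)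

/-- Let `A` be a unital separable simple infinite-dimensional C*-algebra
whose extreme tracial boundary `∂ₑ(T(A))` is compact.  Then for any uniformly bounded
central sequence `(fₙ)` in `A` and any `a ∈ A`,
`max_{τ ∈ ∂ₑ(T(A))} |τ(fₙ a) − τ(fₙ)τ(a)| → 0`. -/
theorem statement8
    (A : Type) [CStarAlgebra A] [TopologicalSpace.SeparableSpace A]
    (hsimple : IsSimpleCStarAlgebra A)
    (hinfdim : ¬ FiniteDimensional ℂ A)
    (htrace : (TraceSpace A).Nonempty)
    (hcpt : IsCompact (ExtremeTraceBoundary A))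
    (f : ℕ → A) (C : ℝ) (hbdd : ∀ n, ‖f n‖ ≤ C)
    (hcentral : ∀ x : A,
      Filter.Tendsto (fun n => ‖f n * x - x * f n‖) Filter.atTop (nhds 0))
    (a : A) :
    Filter.Tendsto
      (fun n => sSup ((fun τ : WeakDual ℂ A =>
        ‖τ (f n * a) - τ (f n) * τ a‖) '' ExtremeTraceBoundary A))
      Filter.atTop (nhds 0) :=
  statement8_general A hcpt f C hbdd hcentral a
end

section
/- Let B be a unital C*-algebra, and for m ∈ ℕ define g_m(t) = min{1, mt}. Then for any positive contractions b₁, ..., b_N in B, setting rᵢ = bᵢ^{1/2}(Σ_{j≠i} bⱼ)bᵢ^{1/2} and aᵢ = bᵢ^{1/2}(1 − g_m(rᵢ))bᵢ^{1/2}, one has 0 ≤ aᵢ ≤ bᵢ and ‖aᵢ aⱼ‖² ≤ ‖aᵢ (Σ_{j≠i} bⱼ) aᵢ‖ ≤ ‖(1 − g_m(rᵢ)) rᵢ‖ < 1/m for i ≠ j. -/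
open scoped Finset

section Aux

variable {B : Type} [CStarAlgebra B] [PartialOrder B] [StarOrderedRing B]

lemma aux_sq_le_self (x : B) (hx : 0 ≤ x) (hx1 : ‖x‖ ≤ 1) : x * x ≤ x := by
  nontriviality B
  rw [← sub_nonneg]
  have hxsa : IsSelfAdjoint x := .of_nonneg hx
  have hx2 : x - x * x = cfc (fun t : ℝ => t - t * t) x := by
    conv_lhs => rw [← cfc_id' ℝ x]
    rw [← cfc_mul (fun t : ℝ => t) (fun t : ℝ => t) x, ← cfc_sub _ _ x]
  rw [hx2]
  apply cfc_nonneg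
  intro t ht
  have h0 : 0 ≤ t := spectrum_nonneg_of_nonneg hx ht
  have h1 : t ≤ 1 := by
    have := spectrum.norm_le_norm_of_mem ht
    rw [Real.norm_of_nonneg h0] at this
    linarith
  nlinarith

lemma aux_assoc (s u S : B) :
    (s * u * s) * S * (s * u * s) = s * (u * (s * S * s) * u) * s := by
  noncomm_ring

end Aux

/-- Let `B` be a unital C*-algebra and `b₁, ..., b_N` positive contractions
in `B`.  With `g_m(t) = min 1 (m*t)`, set `rᵢ = bᵢ^{1/2} (Σ_{j≠i} bⱼ) bᵢ^{1/2}` and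
`aᵢ = bᵢ^{1/2} (1 - g_m(rᵢ)) bᵢ^{1/2}` (square roots and `g_m(rᵢ)` via continuous
functional calculus).  Then `0 ≤ aᵢ ≤ bᵢ` and, for `i ≠ j`,
`‖aᵢ aⱼ‖² ≤ ‖aᵢ (Σ_{j'≠i} bⱼ') aᵢ‖ ≤ ‖(1 - g_m(rᵢ)) rᵢ‖ < 1/m`. -/
theorem statement10
    (B : Type) [CStarAlgebra B] [PartialOrder B] [StarOrderedRing B]
    (N m : ℕ) (hm : 1 ≤ m)
    (b : Fin N → B) (hb_pos : ∀ i, 0 ≤ b i) (hb_con : ∀ i, ‖b i‖ ≤ 1)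
    (r a : Fin N → B)
    (hr : ∀ i, r i =
      CFC.sqrt (b i) * (∑ j ∈ Finset.univ.erase i, b j) * CFC.sqrt (b i))
    (ha : ∀ i, a i =
      CFC.sqrt (b i) * (1 - cfc (fun t : ℝ => min 1 (m * t)) (r i)) * CFC.sqrt (b i)) :
    (∀ i, 0 ≤ a i ∧ a i ≤ b i) ∧
    ∀ i j, i ≠ j →
      ‖a i * a j‖ ^ 2 ≤ ‖a i * (∑ j' ∈ Finset.univ.erase i, b j') * a i‖ ∧
      ‖a i * (∑ j' ∈ Finset.univ.erase i, b j') * a i‖ ≤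
        ‖(1 - cfc (fun t : ℝ => min 1 (m * t)) (r i)) * r i‖ ∧
      ‖(1 - cfc (fun t : ℝ => min 1 (m * t)) (r i)) * r i‖ < 1 / m := by
  have hm0 : (0 : ℝ) < m := by exact_mod_cast Nat.pos_of_ne_zero (by omega)
  -- basic facts
  have hs_sa : ∀ i, IsSelfAdjoint (CFC.sqrt (b i)) := fun i => .of_nonneg (CFC.sqrt_nonneg _)
  have hS_nonneg : ∀ i : Fin N, (0 : B) ≤ ∑ j ∈ Finset.univ.erase i, b j :=
    fun i => Finset.sum_nonneg fun j _ => hb_pos j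
  have hr_nonneg : ∀ i, 0 ≤ r i := by
    intro i
    rw [hr i]
    have := star_left_conjugate_nonneg (hS_nonneg i) (CFC.sqrt (b i))
    rwa [(hs_sa i).star_eq] at this
  have hr_sa : ∀ i, IsSelfAdjoint (r i) := fun i => .of_nonneg (hr_nonneg i)
  have hspec : ∀ i, ∀ t ∈ spectrum ℝ (r i), (0 : ℝ) ≤ t :=
    fun i t ht => spectrum_nonneg_of_nonneg (hr_nonneg i) ht
  have hu_cfc : ∀ i, 1 - cfc (fun t : ℝ => min 1 (m * t)) (r i)
      = cfc (fun t : ℝ => 1 - min 1 (m * t)) (r i) := by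
    intro i
    rw [cfc_sub (fun _ : ℝ => (1 : ℝ)) (fun t : ℝ => min 1 (m * t)) (r i), cfc_const _ _, map_one]
  have hu_nonneg : ∀ i, (0 : B) ≤ 1 - cfc (fun t : ℝ => min 1 (m * t)) (r i) := by
    intro i
    rw [hu_cfc i]
    exact cfc_nonneg fun t ht => by simpa using min_le_left (1 : ℝ) (m * t)
  have hu_norm : ∀ i, ‖(1 : B) - cfc (fun t : ℝ => min 1 (m * t)) (r i)‖ ≤ 1 := by
    intro i
    rw [hu_cfc i]
    refine norm_cfc_le zero_le_one fun t ht => ?_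
    have h0 := hspec i t ht
    have h1 : (0 : ℝ) ≤ min 1 (m * t) := le_min zero_le_one (by positivity)
    have h2 : min 1 (m * t) ≤ 1 := min_le_left _ _
    rw [Real.norm_eq_abs, abs_le]
    constructor <;> linarith
  have hu_sa : ∀ i, IsSelfAdjoint ((1 : B) - cfc (fun t : ℝ => min 1 (m * t)) (r i)) :=
    fun i => .of_nonneg (hu_nonneg i)
  have ha_nonneg : ∀ i, 0 ≤ a i := by
    intro i
    rw [ha i]
    have := star_left_conjugate_nonneg (hu_nonneg i) (CFC.sqrt (b i))
    rwa [(hs_sa i).star_eq] at this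
  have ha_le : ∀ i, a i ≤ b i := by
    intro i
    have hu_le_one : (1 : B) - cfc (fun t : ℝ => min 1 (m * t)) (r i) ≤ 1 := by
      have : (0 : B) ≤ cfc (fun t : ℝ => min 1 (m * t)) (r i) :=
        cfc_nonneg fun t ht => le_min zero_le_one (mul_nonneg hm0.le (hspec i t ht))
      exact sub_le_self _ this
    have := star_left_conjugate_le_conjugate hu_le_one (CFC.sqrt (b i))
    rw [(hs_sa i).star_eq, mul_one, CFC.sqrt_mul_sqrt_self (b i) (hb_pos i)] at this
    rw [ha i]
    exact this
  have ha_sa : ∀ i, IsSelfAdjoint (a i) := fun i => .of_nonneg (ha_nonneg i)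
  have ha_norm : ∀ i, ‖a i‖ ≤ 1 := fun i =>
    (CStarAlgebra.norm_le_norm_of_nonneg_of_le (ha_nonneg i) (ha_le i)).trans (hb_con i)
  have hs_norm : ∀ i, ‖CFC.sqrt (b i)‖ ≤ 1 := by
    intro i
    have h1 : ‖CFC.sqrt (b i)‖ * ‖CFC.sqrt (b i)‖ = ‖b i‖ := by
      conv_rhs => rw [← CFC.sqrt_mul_sqrt_self (b i) (hb_pos i)]
      rw [← CStarRing.norm_star_mul_self, (hs_sa i).star_eq]
    nlinarith [norm_nonneg (CFC.sqrt (b i)), hb_con i]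
  refine ⟨fun i => ⟨ha_nonneg i, ha_le i⟩, fun i j hij => ?_⟩
  set S := ∑ j' ∈ Finset.univ.erase i, b j' with hS
  -- first inequality
  have hbjS : b j ≤ S :=
    Finset.single_le_sum (fun k _ => hb_pos k)
      (Finset.mem_erase.mpr ⟨hij.symm, Finset.mem_univ j⟩)
  have hsum : a j * a j ≤ S :=
    (aux_sq_le_self (a j) (ha_nonneg j) (ha_norm j)).trans ((ha_le j).trans hbjS)
  have hconj : a i * (a j * a j) * a i ≤ a i * S * a i := by
    have := star_left_conjugate_le_conjugate hsum (a i)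
    rwa [(ha_sa i).star_eq] at this
  have hconj_nonneg : 0 ≤ a i * (a j * a j) * a i := by
    have hjj : 0 ≤ a j * a j := by
      have := star_mul_self_nonneg (a j)
      rwa [(ha_sa j).star_eq] at this
    have := star_left_conjugate_nonneg hjj (a i)
    rwa [(ha_sa i).star_eq] at this
  have first : ‖a i * a j‖ ^ 2 ≤ ‖a i * S * a i‖ := by
    have he : ‖a i * a j‖ ^ 2 = ‖a i * (a j * a j) * a i‖ := by
      rw [sq, ← CStarRing.norm_self_mul_star (x := a i * a j)]
      congr 1
      rw [star_mul, (ha_sa i).star_eq, (ha_sa j).star_eq]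
      noncomm_ring
    rw [he]
    exact CStarAlgebra.norm_le_norm_of_nonneg_of_le hconj_nonneg hconj
  -- second inequality
  have second : ‖a i * S * a i‖ ≤ ‖(1 - cfc (fun t : ℝ => min 1 (m * t)) (r i)) * r i‖ := by
    set u := (1 : B) - cfc (fun t : ℝ => min 1 (m * t)) (r i) with hu
    have heq : a i * S * a i = CFC.sqrt (b i) * (u * r i * u) * CFC.sqrt (b i) := by
      rw [ha i, ← hu, aux_assoc, ← hr i]
    rw [heq]
    calc ‖CFC.sqrt (b i) * (u * r i * u) * CFC.sqrt (b i)‖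
        ≤ ‖CFC.sqrt (b i) * (u * r i * u)‖ * ‖CFC.sqrt (b i)‖ := norm_mul_le _ _
      _ ≤ ‖CFC.sqrt (b i) * (u * r i * u)‖ := by
          exact mul_le_of_le_one_right (norm_nonneg _) (hs_norm i)
      _ ≤ ‖CFC.sqrt (b i)‖ * ‖u * r i * u‖ := norm_mul_le _ _
      _ ≤ ‖u * r i * u‖ := mul_le_of_le_one_left (norm_nonneg _) (hs_norm i)
      _ ≤ ‖u * r i‖ * ‖u‖ := norm_mul_le _ _
      _ ≤ ‖u * r i‖ := mul_le_of_le_one_right (norm_nonneg _) (hu_norm i)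
  -- third inequality
  have third : ‖(1 - cfc (fun t : ℝ => min 1 (m * t)) (r i)) * r i‖ < 1 / m := by
    have hur : (1 - cfc (fun t : ℝ => min 1 (m * t)) (r i)) * r i
        = cfc (fun t : ℝ => (1 - min 1 (m * t)) * t) (r i) := by
      rw [cfc_mul (fun t : ℝ => 1 - min 1 (m * t)) (fun t : ℝ => t) (r i),
        ← hu_cfc i, cfc_id' ℝ (r i)]
    rw [hur]
    have hb4 : ‖cfc (fun t : ℝ => (1 - min 1 (m * t)) * t) (r i)‖ ≤ 1 / (4 * m) := by
      refine norm_cfc_le (by positivity) fun t ht => ?_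
      have h0 := hspec i t ht
      have h2 : min 1 (m * t) ≤ 1 := min_le_left _ _
      have h3 : (0 : ℝ) ≤ (1 - min 1 (m * t)) * t := mul_nonneg (by linarith) h0
      rw [Real.norm_of_nonneg h3, le_div_iff₀ (by positivity)]
      rcases le_total ((m : ℝ) * t) 1 with h | h
      · rw [min_eq_right h]
        nlinarith [sq_nonneg (2 * (m : ℝ) * t - 1)]
      · rw [min_eq_left h]
        simp
    refine hb4.trans_lt ?_
    rw [div_lt_div_iff₀ (by positivity) hm0]
    nlinarith
  exact ⟨first, second, third⟩
end
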